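/- arXiv:1001.1933 — 4 statements merged into one kernel-verified Lean document; each statement's English description precedes it below -/
import Mathlib

section
/- A convex combination of quasi-simple functions shifted by a time term is quasi-simple in the time-shift sense: let (F_i)_{i∈I} be a finite family of functions on clock valuations, each Lipschitz with constant K, monotonically decreasing and nonexpansive w.r.t. ⊴, let (δ_i)_{i∈I} be nonnegative weights summing to 1, let b ∈ ℤ, c ∈ C, and for each i let T_i be either the reset map ν ↦ (ν + (b − ν(c)))[C_i := 0] for some subset C_i of clocks (where ν + t adds t to every clock and [C_i := 0] sets the clocks in C_i to zero). Then the function G(ν) = (b − ν(c)) + Σ_i δ_i · F_i(T_i(ν)) is Lipschitz with constant (1 + K). -/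
/-- Time-elapse partial order on clock valuations. -/
def TimeElapse {C : Type*} (ν ν' : C → ℝ) (t : ℝ) : Prop :=
  0 ≤ t ∧ (∀ c, ν' c - ν c = t ∨ ν' c = ν c) ∧ ∃ c, ν' c - ν c = t

/-- Reset the clocks in `D` to zero. -/
def reset {C : Type*} [DecidableEq C] (ν : C → ℝ) (D : Finset C) : C → ℝ :=
  fun c => if c ∈ D then 0 else ν c

lemma key_lemma {C : Type*} [Fintype C] [Nonempty C]
    [DecidableEq C] {I : Type*} [Fintype I]
    (F : I → (C → ℝ) → ℝ) (K : ℝ) (hK : 0 ≤ K)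
    (hLip : ∀ i, ∀ ν ν' : C → ℝ, |F i ν - F i ν'| ≤ K * ‖ν - ν'‖)
    (hmono : ∀ i, ∀ ν ν' : C → ℝ, ∀ t, TimeElapse ν ν' t →
      0 ≤ F i ν - F i ν' ∧ F i ν - F i ν' ≤ t)
    (δ : I → ℝ) (hδ : ∀ i, 0 ≤ δ i) (hsum : ∑ i, δ i = 1)
    (b : ℤ) (c : C) (D : I → Finset C) (ν ν' : C → ℝ) (hc : ν c ≤ ν' c) :
      |((b - ν c) + ∑ i, δ i * F i (reset (fun d => ν d + (b - ν c)) (D i))) -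
        ((b - ν' c) + ∑ i, δ i * F i (reset (fun d => ν' d + (b - ν' c)) (D i)))|
        ≤ (1 + K) * ‖ν - ν'‖ := by
  set t : ℝ := (b : ℝ) - ν c with ht
  set t' : ℝ := (b : ℝ) - ν' c with ht'
  have hs : 0 ≤ t - t' := by simp [ht, ht']; linarith
  set μ : I → (C → ℝ) := fun i => reset (fun d => ν d + t) (D i) with hμ
  set μ'' : I → (C → ℝ) := fun i => reset (fun d => ν' d + t) (D i) with hμ''
  set μ' : I → (C → ℝ) := fun i => reset (fun d => ν' d + t') (D i) with hμ'
  have hnn : (0:ℝ) ≤ ‖ν - ν'‖ := norm_nonneg _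
  have htle : t - t' ≤ ‖ν - ν'‖ := by
    have := norm_le_pi_norm (ν - ν') c
    have h2 : |ν c - ν' c| ≤ ‖ν - ν'‖ := by simpa [Real.norm_eq_abs] using this
    have := abs_le.mp h2
    simp only [ht, ht']; linarith [this.1]
  -- Claim A
  have hA : ∀ i, |F i (μ i) - F i (μ'' i)| ≤ K * ‖ν - ν'‖ := by
    intro i
    refine le_trans (hLip i _ _) (mul_le_mul_of_nonneg_left ?_ hK)
    refine pi_norm_le_iff_of_nonneg hnn |>.mpr fun d => ?_
    by_cases hd : d ∈ D i
    · simp [hμ, hμ'', reset, hd, hnn]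
    · have := norm_le_pi_norm (ν - ν') d
      simpa [hμ, hμ'', reset, hd, Real.norm_eq_abs] using this
  -- Claim B
  have hB : ∀ i, -(t - t') ≤ F i (μ'' i) - F i (μ' i) ∧ F i (μ'' i) - F i (μ' i) ≤ 0 := by
    intro i
    by_cases hD : D i = Finset.univ
    · have : μ'' i = μ' i := by funext d; simp [hμ'', hμ', reset, hD]
      rw [this]; exact ⟨by simp; linarith, by simp⟩
    · obtain ⟨d, hd⟩ : ∃ d, d ∉ D i := by
        by_contra h; push_neg at h
        exact hD (Finset.eq_univ_iff_forall.mpr h)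
      have hTE : TimeElapse (μ' i) (μ'' i) (t - t') := by
        refine ⟨hs, fun e => ?_, ⟨d, ?_⟩⟩
        · by_cases he : e ∈ D i
          · right; simp [hμ'', hμ', reset, he]
          · left; simp [hμ'', hμ', reset, he]
        · simp [hμ'', hμ', reset, hd]
      have := hmono i (μ' i) (μ'' i) (t - t') hTE
      constructor <;> linarith [this.1, this.2]
  -- split
  have hsplit : ((t + ∑ i, δ i * F i (μ i)) - (t' + ∑ i, δ i * F i (μ' i)))
      = (t - t') + (∑ i, δ i * (F i (μ i) - F i (μ'' i)))
        + ∑ i, δ i * (F i (μ'' i) - F i (μ' i)) := by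
    have heq : ∀ i : I, δ i * F i (μ i) - δ i * F i (μ' i)
        = δ i * (F i (μ i) - F i (μ'' i)) + δ i * (F i (μ'' i) - F i (μ' i)) :=
      fun i => by ring
    calc (t + ∑ i, δ i * F i (μ i)) - (t' + ∑ i, δ i * F i (μ' i))
        = (t - t') + ∑ i, (δ i * F i (μ i) - δ i * F i (μ' i)) := by
          rw [Finset.sum_sub_distrib]; ring
      _ = _ := by
          rw [Finset.sum_congr rfl fun i _ => heq i, Finset.sum_add_distrib]; ring
  have h2 : |∑ i, δ i * (F i (μ i) - F i (μ'' i))| ≤ K * ‖ν - ν'‖ := by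
    calc |∑ i, δ i * (F i (μ i) - F i (μ'' i))|
        ≤ ∑ i, |δ i * (F i (μ i) - F i (μ'' i))| := Finset.abs_sum_le_sum_abs _ _
      _ ≤ ∑ i, δ i * (K * ‖ν - ν'‖) := by
          refine Finset.sum_le_sum fun i _ => ?_
          rw [abs_mul, abs_of_nonneg (hδ i)]
          exact mul_le_mul_of_nonneg_left (hA i) (hδ i)
      _ = K * ‖ν - ν'‖ := by rw [← Finset.sum_mul, hsum, one_mul]
  have h3a : ∑ i, δ i * (F i (μ'' i) - F i (μ' i)) ≤ 0 :=
    Finset.sum_nonpos fun i _ => mul_nonpos_of_nonneg_of_nonpos (hδ i) (hB i).2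
  have h3b : -(t - t') ≤ ∑ i, δ i * (F i (μ'' i) - F i (μ' i)) := by
    calc -(t - t') = ∑ i, δ i * (-(t - t')) := by
          rw [← Finset.sum_mul, hsum, one_mul]
      _ ≤ _ := Finset.sum_le_sum fun i _ => mul_le_mul_of_nonneg_left (hB i).1 (hδ i)
  show |(t + ∑ i, δ i * F i (μ i)) - (t' + ∑ i, δ i * F i (μ' i))| ≤ (1 + K) * ‖ν - ν'‖
  have h2' := abs_le.mp h2
  rw [abs_le]
  constructor
  · rw [hsplit]; nlinarith [h2'.1, h3b, hs, htle]
  · rw [hsplit]; nlinarith [h2'.2, h3a, hs, htle]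

/-- A convex combination of quasi-simple functions, composed with the
time-elapse-to-boundary-and-reset maps and shifted by the elapsed time
`b − ν(c)`, is `(1 + K)`-Lipschitz. -/
theorem convex_combination_lipschitz {C : Type*} [Fintype C] [Nonempty C]
    [DecidableEq C] {I : Type*} [Fintype I]
    (F : I → (C → ℝ) → ℝ) (K : ℝ) (hK : 0 ≤ K)
    (hLip : ∀ i, ∀ ν ν' : C → ℝ, |F i ν - F i ν'| ≤ K * ‖ν - ν'‖)
    (hmono : ∀ i, ∀ ν ν' : C → ℝ, ∀ t, TimeElapse ν ν' t →
      0 ≤ F i ν - F i ν' ∧ F i ν - F i ν' ≤ t)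
    (δ : I → ℝ) (hδ : ∀ i, 0 ≤ δ i) (hsum : ∑ i, δ i = 1)
    (b : ℤ) (c : C) (D : I → Finset C) :
    ∀ ν ν' : C → ℝ,
      |((b - ν c) + ∑ i, δ i * F i (reset (fun d => ν d + (b - ν c)) (D i))) -
        ((b - ν' c) + ∑ i, δ i * F i (reset (fun d => ν' d + (b - ν' c)) (D i)))|
        ≤ (1 + K) * ‖ν - ν'‖ := by
  intro ν ν'
  rcases le_total (ν c) (ν' c) with h | h
  · exact key_lemma F K hK hLip hmono δ hδ hsum b c D ν ν' h
  · rw [abs_sub_comm, norm_sub_rev]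
    exact key_lemma F K hK hLip hmono δ hδ hsum b c D ν' ν h
end

section
/- On a fixed clock region, any two simple functions are comparable: if ζ is a clock region and F, F' : ζ → ℝ are simple functions, then either F(ν) ≤ F'(ν) for all ν ∈ ζ, or F'(ν) ≤ F(ν) for all ν ∈ ζ. -/
/-- A function is simple on `X` if it is constantly an integer, or of the form
`ν ↦ e − ν(c)` for an integer `e` and a clock `c`. -/
def SimpleOn {C : Type*} (X : Set (C → ℝ)) (F : (C → ℝ) → ℝ) : Prop :=
  (∃ e : ℤ, ∀ ν ∈ X, F ν = e) ∨ (∃ (e : ℤ) (c : C), ∀ ν ∈ X, F ν = e - ν c)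

/-- On a fixed clock region (a set of `k`-bounded valuations all satisfying the
same simple clock constraints), any two simple functions are comparable. -/
theorem simple_comparable_on_region {C : Type*} [Fintype C] [Nonempty C]
    (k : ℕ) (ζ : Set (C → ℝ))
    (hbd : ∀ ν ∈ ζ, ∀ c, ν c ∈ Set.Icc (0 : ℝ) k)
    (hreg : ∀ ν ∈ ζ, ∀ ν' ∈ ζ,
      (∀ (c : C) (i : ℕ), i ≤ k →
        ((ν c < i ↔ ν' c < i) ∧ (ν c = i ↔ ν' c = i))) ∧
      (∀ (c c' : C) (i : ℤ), |i| ≤ (k : ℤ) →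
        ((ν c - ν c' < i ↔ ν' c - ν' c' < i) ∧
         (ν c - ν c' = i ↔ ν' c - ν' c' = i))))
    (F F' : (C → ℝ) → ℝ) (hF : SimpleOn ζ F) (hF' : SimpleOn ζ F') :
    (∀ ν ∈ ζ, F ν ≤ F' ν) ∨ (∀ ν ∈ ζ, F' ν ≤ F ν) := by
  -- single-clock comparisons against any integer are region-invariant
  have hclk : ∀ ν ∈ ζ, ∀ ν' ∈ ζ, ∀ (c : C) (m : ℤ),
      ((ν c < m ↔ ν' c < m) ∧ (ν c = m ↔ ν' c = m)) := by
    intro ν hν ν' hν' c m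
    rcases lt_trichotomy m 0 with hm | hm | hm
    · have h1 := (hbd ν hν c).1
      have h2 := (hbd ν' hν' c).1
      have hm' : (m : ℝ) < 0 := by exact_mod_cast hm
      constructor
      · constructor <;> intro h <;> linarith
      · constructor <;> intro h <;> linarith
    · subst hm
      exact (hreg ν hν ν' hν').1 c 0 (Nat.zero_le _)
    · by_cases hk : m ≤ (k : ℤ)
      · have hm0 : 0 ≤ m := le_of_lt hm
        have := (hreg ν hν ν' hν').1 c m.toNat (by omega)
        have hcast : ((m.toNat : ℕ) : ℝ) = (m : ℝ) := by
          exact_mod_cast Int.toNat_of_nonneg hm0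
        rwa [hcast] at this
      · have h1 := (hbd ν hν c).2
        have h2 := (hbd ν' hν' c).2
        have hk' : (k : ℝ) < (m : ℝ) := by exact_mod_cast (by omega : (k:ℤ) < m)
        constructor
        · constructor <;> intro _ <;> linarith
        · constructor <;> intro h <;> linarith
  -- clock-difference comparisons against any integer are region-invariant
  have hdif : ∀ ν ∈ ζ, ∀ ν' ∈ ζ, ∀ (c c' : C) (m : ℤ),
      ((ν c - ν c' < m ↔ ν' c - ν' c' < m) ∧ (ν c - ν c' = m ↔ ν' c - ν' c' = m)) := by
    intro ν hν ν' hν' c c' m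
    by_cases habs : |m| ≤ (k : ℤ)
    · exact (hreg ν hν ν' hν').2 c c' m habs
    · have h1 := hbd ν hν c
      have h2 := hbd ν hν c'
      have h3 := hbd ν' hν' c
      have h4 := hbd ν' hν' c'
      simp only [Set.mem_Icc] at h1 h2 h3 h4
      rcases lt_or_ge m 0 with hm | hm
      · have hm' : (m : ℝ) < -(k : ℝ) := by
          have : m < -(k : ℤ) := by rw [abs_of_neg hm] at habs; omega
          exact_mod_cast this
        constructor
        · constructor <;> intro h <;> linarith [h1.1, h2.2, h3.1, h4.2]
        · constructor <;> intro h <;> linarith [h1.1, h2.2, h3.1, h4.2]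
      · have hm' : (k : ℝ) < (m : ℝ) := by
          have : (k : ℤ) < m := by rw [abs_of_nonneg hm] at habs; omega
          exact_mod_cast this
        constructor
        · constructor <;> intro _ <;> linarith [h1.2, h2.1, h3.2, h4.1]
        · constructor <;> intro h <;> linarith [h1.2, h2.1, h3.2, h4.1]
  -- le versions
  have hclk_le : ∀ ν ∈ ζ, ∀ ν' ∈ ζ, ∀ (c : C) (m : ℤ), (ν c ≤ m ↔ ν' c ≤ m) := by
    intro ν hν ν' hν' c m
    obtain ⟨hl, he⟩ := hclk ν hν ν' hν' c m
    rw [le_iff_lt_or_eq, le_iff_lt_or_eq, hl, he]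
  have hdif_le : ∀ ν ∈ ζ, ∀ ν' ∈ ζ, ∀ (c c' : C) (m : ℤ),
      (ν c - ν c' ≤ m ↔ ν' c - ν' c' ≤ m) := by
    intro ν hν ν' hν' c c' m
    obtain ⟨hl, he⟩ := hdif ν hν ν' hν' c c' m
    rw [le_iff_lt_or_eq, le_iff_lt_or_eq, hl, he]
  -- the key transfer lemma
  have key : ∀ (G G' : (C → ℝ) → ℝ), SimpleOn ζ G → SimpleOn ζ G' →
      ∀ ν ∈ ζ, ∀ ν' ∈ ζ, G ν ≤ G' ν → G ν' ≤ G' ν' := by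
    intro G G' hG hG' ν hν ν' hν' hle
    rcases hG with ⟨e, hge⟩ | ⟨e, c, hge⟩ <;> rcases hG' with ⟨e', hge'⟩ | ⟨e', c', hge'⟩
    · rw [hge ν' hν', hge' ν' hν']
      rw [hge ν hν, hge' ν hν] at hle
      exact hle
    · rw [hge ν' hν', hge' ν' hν']
      rw [hge ν hν, hge' ν hν] at hle
      have : ν c' ≤ (e' - e : ℤ) := by push_cast; linarith
      have := (hclk_le ν hν ν' hν' c' (e' - e)).mp this
      push_cast at this; linarith
    · rw [hge ν' hν', hge' ν' hν']
      rw [hge ν hν, hge' ν hν] at hle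
      have h1 : ¬ ν c < (e - e' : ℤ) := by push_cast; linarith
      have h2 : ¬ ν' c < (e - e' : ℤ) := by
        rw [← (hclk ν hν ν' hν' c (e - e')).1]; exact h1
      push_cast at h2; linarith
    · rw [hge ν' hν', hge' ν' hν']
      rw [hge ν hν, hge' ν hν] at hle
      have : ν c' - ν c ≤ (e' - e : ℤ) := by push_cast; linarith
      have := (hdif_le ν hν ν' hν' c' c (e' - e)).mp this
      push_cast at this; linarith
  by_cases hne : ζ.Nonempty
  · obtain ⟨ν₀, hν₀⟩ := hne
    by_cases h : F ν₀ ≤ F' ν₀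
    · exact Or.inl fun ν hν => key F F' hF hF' ν₀ hν₀ ν hν h
    · exact Or.inr fun ν hν => key F' F hF' hF ν₀ hν₀ ν hν (le_of_not_ge h)
  · exact Or.inl fun ν hν => absurd ⟨ν, hν⟩ hne
end

section
/- Let (F_i)_{i=1..n} be functions on clock valuations each monotonically decreasing and nonexpansive w.r.t. ⊴, let δ_i ≥ 0 with Σδ_i = 1, and let C_1, ..., C_n ⊆ C be reset sets. Then the function G(t) = t + Σ_i δ_i · F_i((ν + t)[C_i := 0]) is nondecreasing on any interval I ⊆ ℝ≥0 such that for all t ∈ I and all i, (ν+t)[C_i := 0] is in the domain of F_i. (This is the key monotonicity lemma for timed-action optimization inside a region.) -/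
/-- Key monotonicity lemma: `t ↦ t + Σᵢ δᵢ · Fᵢ((ν + t)[Cᵢ := 0])` is
nondecreasing on any interval of nonnegative times staying inside the domains
of the `Fᵢ`, when each `Fᵢ` is decreasing and nonexpansive w.r.t. `⊴`. -/
theorem timed_action_nondecreasing {C : Type*} [Fintype C] [Nonempty C]
    [DecidableEq C] {I : Type*} [Fintype I]
    (Xd : I → Set (C → ℝ)) (F : I → (C → ℝ) → ℝ)
    (hF : ∀ i, ∀ ν ∈ Xd i, ∀ ν' ∈ Xd i, ∀ t, TimeElapse ν ν' t →
      0 ≤ F i ν - F i ν' ∧ F i ν - F i ν' ≤ t)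
    (δ : I → ℝ) (hδ : ∀ i, 0 ≤ δ i) (hsum : ∑ i, δ i = 1)
    (D : I → Finset C) (ν : C → ℝ) (J : Set ℝ) (hJ : ∀ t ∈ J, (0 : ℝ) ≤ t)
    (hdom : ∀ t ∈ J, ∀ i, reset (fun c => ν c + t) (D i) ∈ Xd i) :
    ∀ t₁ ∈ J, ∀ t₂ ∈ J, t₁ ≤ t₂ →
      t₁ + ∑ i, δ i * F i (reset (fun c => ν c + t₁) (D i)) ≤
      t₂ + ∑ i, δ i * F i (reset (fun c => ν c + t₂) (D i)) := by
  intro t₁ h₁ t₂ h₂ hle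
  have key : ∀ i, F i (reset (fun c => ν c + t₁) (D i)) -
      F i (reset (fun c => ν c + t₂) (D i)) ≤ t₂ - t₁ := by
    intro i
    by_cases hD : ∃ c, c ∉ D i
    · have hTE : TimeElapse (reset (fun c => ν c + t₁) (D i))
          (reset (fun c => ν c + t₂) (D i)) (t₂ - t₁) := by
        refine ⟨by linarith, ?_, ?_⟩
        · intro c
          by_cases hc : c ∈ D i
          · right; simp [reset, hc]
          · left; simp [reset, hc]
        · obtain ⟨c, hc⟩ := hD
          exact ⟨c, by simp [reset, hc]⟩
      exact (hF i _ (hdom t₁ h₁ i) _ (hdom t₂ h₂ i) _ hTE).2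
    · push_neg at hD
      have : reset (fun c => ν c + t₁) (D i) = reset (fun c => ν c + t₂) (D i) := by
        funext c; simp [reset, hD c]
      rw [this]; simp; linarith
  have hsum' : ∑ i, δ i * (F i (reset (fun c => ν c + t₁) (D i)) -
      F i (reset (fun c => ν c + t₂) (D i))) ≤ ∑ i, δ i * (t₂ - t₁) := by
    apply Finset.sum_le_sum
    intro i _
    exact mul_le_mul_of_nonneg_left (key i) (hδ i)
  have h2 : ∑ i, δ i * (t₂ - t₁) = t₂ - t₁ := by
    rw [← Finset.sum_mul, hsum, one_mul]
  rw [h2] at hsum'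
  simp only [mul_sub, Finset.sum_sub_distrib] at hsum'
  linarith
end

section
/- In a finite Markov decision process where under every pair of strategies the probability of having reached the set F of absorbing final states by time n tends to 1 as n → ∞, any solution P of the expected reachability-reward optimality equations equals the value of the expected reachability-reward game, and for every ε > 0 player Min has a pure ε-optimal strategy: there is a pure strategy μ_ε such that for every strategy χ of Max, the expected total reward accumulated before reaching F starting from s is at most P(s) + ε. Concretely, choosing at the n-th step an action (t,a) with t + Σ_{s'} p(s'|s,(t,a))·P(s') ≤ P(s) + ε/2^{n+1} yields, for all n ≥ 1, P(s) ≥ E[accumulated reward up to min(n, hitting time of F)] + Σ_{s' ∉ F} Pr(X_n = s')·P(s') − (1 − 2^{−n})·ε. -/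
open Finset

/-- A finite Markov decision process with enabled actions, transition
probabilities, nonnegative rewards and a set of final states. -/
structure FinMDP (S A : Type) [Fintype S] [Fintype A] where
  enabled : S → Finset A
  enabled_nonempty : ∀ s, (enabled s).Nonempty
  prob : S → A → S → ℝ
  prob_nonneg : ∀ s a s', 0 ≤ prob s a s'
  prob_sum : ∀ s, ∀ a ∈ enabled s, ∑ s' : S, prob s a s' = 1
  rew : S → A → ℝ
  rew_nonneg : ∀ s a, 0 ≤ rew s a
  final : Finset S

variable {S A : Type} [Fintype S] [Fintype A] [DecidableEq S] [DecidableEq A]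

/-- A (randomized, history-dependent) strategy: a distribution over enabled
actions for each history (`past`, current state). -/
def ValidStrat (M : FinMDP S A) (σ : List S → S → A → ℝ) : Prop :=
  ∀ past s, (∀ a, 0 ≤ σ past s a) ∧ (∑ a ∈ M.enabled s, σ past s a = 1) ∧
    ∀ a ∉ M.enabled s, σ past s a = 0

/-- A strategy is pure if at every history it puts all mass on one enabled action. -/
def PureStrat (M : FinMDP S A) (σ : List S → S → A → ℝ) : Prop :=
  ∀ past s, ∃ a ∈ M.enabled s, ∀ a', σ past s a' = if a' = a then 1 else 0

/-- Combine a strategy for player Min (used at states in `SMin`) with a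
strategy for player Max (used elsewhere). -/
def combine (SMin : Finset S) (μ χ : List S → S → A → ℝ) :
    List S → S → A → ℝ :=
  fun past s => if s ∈ SMin then μ past s else χ past s

/-- Expected reward accumulated up to `min(n, hitting time of the final set)`,
starting from history `past` and current state `s`, under strategy `σ`. -/
def EVr (M : FinMDP S A) (σ : List S → S → A → ℝ) :
    ℕ → List S → S → ℝ
  | 0, _, _ => 0
  | n + 1, past, s =>
      if s ∈ M.final then 0 else
        ∑ a ∈ M.enabled s, σ past s a *
          (M.rew s a + ∑ s' : S, M.prob s a s' * EVr M σ n (past ++ [s]) s')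

/-- Probability that the chain (with final states absorbing) is at `s'` after
`n` steps, starting from history `past` and state `s`, under `σ`. -/
def stateProb (M : FinMDP S A) (σ : List S → S → A → ℝ) :
    ℕ → List S → S → S → ℝ
  | 0, _, s, s' => if s' = s then 1 else 0
  | n + 1, past, s, s' =>
      if s ∈ M.final then (if s' = s then 1 else 0) else
        ∑ a ∈ M.enabled s, σ past s a *
          ∑ s'' : S, M.prob s a s'' * stateProb M σ n (past ++ [s]) s'' s'

/-- Total expected reward accumulated before reaching the final set. -/
noncomputable def EReach (M : FinMDP S A) (σ : List S → S → A → ℝ) (s : S) : ℝ :=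
  ⨆ n : ℕ, EVr M σ n [] s

/-- One-step Bellman value of action `a` at state `s` w.r.t. `P`. -/
def Bell (M : FinMDP S A) (P : S → ℝ) (s : S) (a : A) : ℝ :=
  M.rew s a + ∑ s' : S, M.prob s a s' * P s'

/-- `P` solves the expected reachability-reward optimality equations. -/
def OptEq (M : FinMDP S A) (SMin : Finset S) (P : S → ℝ) : Prop :=
  (∀ s ∈ M.final, P s = 0) ∧
  (∀ s, s ∉ M.final → s ∈ SMin →
    P s = (M.enabled s).inf' (M.enabled_nonempty s) (Bell M P s)) ∧
  (∀ s, s ∉ M.final → s ∉ SMin →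
    P s = (M.enabled s).sup' (M.enabled_nonempty s) (Bell M P s))

/-- The `ε`-greedy property for a Min strategy: at the `n`-th step (history of
length `n`) it only uses actions whose Bellman value is within `ε/2^{n+1}`
of `P`. -/
def Greedy (M : FinMDP S A) (SMin : Finset S) (P : S → ℝ) (ε : ℝ)
    (μ : List S → S → A → ℝ) : Prop :=
  ∀ past s, s ∈ SMin → s ∉ M.final → ∀ a ∈ M.enabled s, μ past s a ≠ 0 →
    Bell M P s a ≤ P s + ε / 2 ^ (past.length + 1)
section Aux

variable (M : FinMDP S A)

lemma stateProb_nonneg {σ : List S → S → A → ℝ} (hσ : ValidStrat M σ) :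
    ∀ n past s s', 0 ≤ stateProb M σ n past s s' := by
  intro n
  induction n with
  | zero => intro past s s'; simp only [stateProb]; split <;> norm_num
  | succ n ih =>
    intro past s s'
    simp only [stateProb]
    split
    · split <;> norm_num
    · apply Finset.sum_nonneg
      intro a _
      apply mul_nonneg ((hσ past s).1 a)
      apply Finset.sum_nonneg
      intro s'' _
      exact mul_nonneg (M.prob_nonneg _ _ _) (ih _ _ _)

lemma stateProb_sum_one {σ : List S → S → A → ℝ} (hσ : ValidStrat M σ) :
    ∀ n past s, ∑ s' : S, stateProb M σ n past s s' = 1 := by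
  intro n
  induction n with
  | zero =>
    intro past s
    simp only [stateProb]
    simp
  | succ n ih =>
    intro past s
    simp only [stateProb]
    split
    · simp
    · rw [Finset.sum_comm]
      calc ∑ a ∈ M.enabled s, ∑ s' : S, σ past s a * ∑ s'' : S, M.prob s a s'' * stateProb M σ n (past ++ [s]) s'' s'
          = ∑ a ∈ M.enabled s, σ past s a * 1 := by
            apply Finset.sum_congr rfl
            intro a ha
            rw [← Finset.mul_sum]
            congr 1
            rw [Finset.sum_comm]
            calc ∑ s'' : S, ∑ s' : S, M.prob s a s'' * stateProb M σ n (past ++ [s]) s'' s'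
                = ∑ s'' : S, M.prob s a s'' * 1 := by
                  apply Finset.sum_congr rfl
                  intro s'' _
                  rw [← Finset.mul_sum, ih]
              _ = 1 := by simp [M.prob_sum s a ha]
        _ = 1 := by simp [(hσ past s).2.1]

lemma EVr_nonneg {σ : List S → S → A → ℝ} (hσ : ValidStrat M σ) :
    ∀ n past s, 0 ≤ EVr M σ n past s := by
  intro n
  induction n with
  | zero => intro past s; simp [EVr]
  | succ n ih =>
    intro past s
    simp only [EVr]
    split
    · norm_num
    · apply Finset.sum_nonneg
      intro a _
      apply mul_nonneg ((hσ past s).1 a)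
      apply add_nonneg (M.rew_nonneg _ _)
      apply Finset.sum_nonneg
      intro s' _
      exact mul_nonneg (M.prob_nonneg _ _ _) (ih _ _)

end Aux
lemma comb_sum {E : Finset A} {T : Finset S} (f : A → ℝ) (p : A → S → ℝ)
    (w : S → S → ℝ) (g : S → ℝ) :
    ∑ s' ∈ T, (∑ a ∈ E, f a * ∑ s'' : S, p a s'' * w s'' s') * g s' =
      ∑ a ∈ E, f a * ∑ s'' : S, p a s'' * (∑ s' ∈ T, w s'' s' * g s') := by
  simp only [Finset.sum_mul, Finset.mul_sum, mul_assoc]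
  rw [Finset.sum_comm]
  apply Finset.sum_congr rfl
  intro a _
  rw [Finset.sum_comm]
set_option linter.unusedSectionVars false

lemma key_max (M : FinMDP S A) (P : S → ℝ) {σ : List S → S → A → ℝ}
    (hσ : ValidStrat M σ)
    (hb : ∀ past s, s ∉ M.final → ∀ a ∈ M.enabled s, σ past s a ≠ 0 →
      P s ≤ Bell M P s a) :
    ∀ n past s, P s ≤ EVr M σ n past s + ∑ s' : S, stateProb M σ n past s s' * P s' := by
  intro n
  induction n with
  | zero =>
    intro past s
    simp [EVr, stateProb, ite_mul, Finset.sum_ite_eq']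
  | succ n ih =>
    intro past s
    by_cases hf : s ∈ M.final
    · simp only [EVr, stateProb, if_pos hf]
      simp [ite_mul, Finset.sum_ite_eq']
    · simp only [EVr, stateProb, if_neg hf]
      rw [comb_sum, ← Finset.sum_add_distrib]
      have h1 : P s = ∑ a ∈ M.enabled s, σ past s a * P s := by
        rw [← Finset.sum_mul, (hσ past s).2.1, one_mul]
      rw [h1]
      apply Finset.sum_le_sum
      intro a ha
      rcases eq_or_ne (σ past s a) 0 with h0 | h0
      · simp [h0]
      rw [← mul_add]
      apply mul_le_mul_of_nonneg_left _ ((hσ past s).1 a)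
      calc P s ≤ Bell M P s a := hb past s hf a ha h0
        _ ≤ M.rew s a + ∑ s'' : S, M.prob s a s'' *
              (EVr M σ n (past ++ [s]) s'' +
                ∑ s' : S, stateProb M σ n (past ++ [s]) s'' s' * P s') := by
          apply add_le_add_right
          apply Finset.sum_le_sum
          intro s'' _
          exact mul_le_mul_of_nonneg_left (ih _ s'') (M.prob_nonneg _ _ _)
        _ = _ := by
          rw [add_assoc, ← Finset.sum_add_distrib]
          congr 1
          apply Finset.sum_congr rfl
          intro s'' _
          ring
lemma key_min (M : FinMDP S A) (P : S → ℝ) (hP0 : ∀ s, 0 ≤ P s)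
    {σ : List S → S → A → ℝ} (hσ : ValidStrat M σ) {ε : ℝ} (hε : 0 ≤ ε)
    (hb : ∀ past s, s ∉ M.final → ∀ a ∈ M.enabled s, σ past s a ≠ 0 →
      Bell M P s a ≤ P s + ε / 2 ^ (past.length + 1)) :
    ∀ n past s, EVr M σ n past s +
      ∑ s' ∈ Finset.univ \ M.final, stateProb M σ n past s s' * P s' ≤
      P s + (1 - (1 / 2 : ℝ) ^ n) * (ε / 2 ^ past.length) := by
  intro n
  induction n with
  | zero =>
    intro past s
    simp only [EVr, stateProb, ite_mul, one_mul, zero_mul, Finset.sum_ite_eq', pow_zero,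
      sub_self, zero_mul, add_zero, zero_add]
    split
    · exact le_refl _
    · exact hP0 s
  | succ n ih =>
    intro past s
    by_cases hf : s ∈ M.final
    · have he : EVr M σ (n+1) past s = 0 := by simp [EVr, hf]
      have hs : ∑ s' ∈ Finset.univ \ M.final, stateProb M σ (n+1) past s s' * P s' = 0 := by
        apply Finset.sum_eq_zero
        intro x hx
        rw [Finset.mem_sdiff] at hx
        have hx2 : x ≠ s := by rintro rfl; exact hx.2 hf
        simp [stateProb, hf, hx2]
      rw [he, hs, add_zero]
      have h1 : (0:ℝ) ≤ (1 - (1 / 2 : ℝ) ^ (n+1)) := by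
        have : ((1:ℝ)/2) ^ (n+1) ≤ 1 ^ (n+1) := by
          apply pow_le_pow_left₀ (by norm_num) (by norm_num)
        simpa using this
      have h2 : (0:ℝ) ≤ ε / 2 ^ past.length := by positivity
      have := mul_nonneg h1 h2
      nlinarith [hP0 s]
    · simp only [EVr, stateProb, if_neg hf]
      rw [comb_sum]
      have hcomb : ∑ a ∈ M.enabled s, σ past s a *
            (M.rew s a + ∑ s' : S, M.prob s a s' * EVr M σ n (past ++ [s]) s') +
          ∑ a ∈ M.enabled s, σ past s a * ∑ s'' : S, M.prob s a s'' *
            (∑ s' ∈ Finset.univ \ M.final, stateProb M σ n (past ++ [s]) s'' s' * P s') =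
          ∑ a ∈ M.enabled s, σ past s a *
            (M.rew s a + ∑ s'' : S, M.prob s a s'' *
              (EVr M σ n (past ++ [s]) s'' +
               ∑ s' ∈ Finset.univ \ M.final, stateProb M σ n (past ++ [s]) s'' s' * P s')) := by
        rw [← Finset.sum_add_distrib]
        apply Finset.sum_congr rfl
        intro a _
        rw [← mul_add]
        congr 1
        rw [add_assoc, ← Finset.sum_add_distrib]
        congr 1
        apply Finset.sum_congr rfl
        intro s'' _
        ring
      rw [hcomb]
      have hlen : (past ++ [s]).length = past.length + 1 := by simp
      calc ∑ a ∈ M.enabled s, σ past s a *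
            (M.rew s a + ∑ s'' : S, M.prob s a s'' *
              (EVr M σ n (past ++ [s]) s'' +
               ∑ s' ∈ Finset.univ \ M.final, stateProb M σ n (past ++ [s]) s'' s' * P s'))
          ≤ ∑ a ∈ M.enabled s, σ past s a *
              (P s + ε / 2 ^ (past.length + 1) +
                (1 - (1 / 2 : ℝ) ^ n) * (ε / 2 ^ (past.length + 1))) := by
            apply Finset.sum_le_sum
            intro a ha
            rcases eq_or_ne (σ past s a) 0 with h0 | h0
            · simp [h0]
            apply mul_le_mul_of_nonneg_left _ ((hσ past s).1 a)
            calc M.rew s a + ∑ s'' : S, M.prob s a s'' *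
                  (EVr M σ n (past ++ [s]) s'' +
                   ∑ s' ∈ Finset.univ \ M.final, stateProb M σ n (past ++ [s]) s'' s' * P s')
                ≤ M.rew s a + ∑ s'' : S, M.prob s a s'' *
                    (P s'' + (1 - (1 / 2 : ℝ) ^ n) * (ε / 2 ^ (past.length + 1))) := by
                  apply add_le_add_right
                  apply Finset.sum_le_sum
                  intro s'' _
                  apply mul_le_mul_of_nonneg_left _ (M.prob_nonneg _ _ _)
                  have := ih (past ++ [s]) s''
                  rw [hlen] at this
                  exact this
              _ = Bell M P s a + (1 - (1 / 2 : ℝ) ^ n) * (ε / 2 ^ (past.length + 1)) := by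
                  simp only [mul_add, Finset.sum_add_distrib, ← Finset.sum_mul,
                    M.prob_sum s a ha, one_mul, Bell]
                  ring
              _ ≤ P s + ε / 2 ^ (past.length + 1) +
                    (1 - (1 / 2 : ℝ) ^ n) * (ε / 2 ^ (past.length + 1)) := by
                  have := hb past s hf a ha h0
                  linarith
        _ = P s + (1 - (1 / 2 : ℝ) ^ (n + 1)) * (ε / 2 ^ past.length) := by
            rw [← Finset.sum_mul, (hσ past s).2.1, one_mul]
            have h2 : (2:ℝ) ^ (past.length + 1) = 2 * 2 ^ past.length := by
              rw [pow_succ]; ring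
            have h3 : ((1:ℝ)/2) ^ (n + 1) = (1/2) ^ n * (1/2) := pow_succ _ _
            have h4 : (2:ℝ) ^ past.length ≠ 0 := by positivity
            rw [h2, h3]
            field_simp
            ring
section Rank

noncomputable def stepF (M : FinMDP S A) (T : Finset S) : Finset S :=
  letI := Classical.propDecidable
  T ∪ Finset.univ.filter (fun s => ∀ a ∈ M.enabled s, ∃ s', 0 < M.prob s a s' ∧ s' ∈ T)

lemma mem_stepF {M : FinMDP S A} {T : Finset S} {s : S} :
    s ∈ stepF M T ↔ s ∈ T ∨ ∀ a ∈ M.enabled s, ∃ s', 0 < M.prob s a s' ∧ s' ∈ T := by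
  classical
  simp [stepF]

lemma subset_stepF (M : FinMDP S A) (T : Finset S) : T ⊆ stepF M T := by
  intro s hs; exact mem_stepF.2 (Or.inl hs)

noncomputable def Vseq (M : FinMDP S A) (k : ℕ) : Finset S := (stepF M)^[k] M.final

lemma Vseq_succ (M : FinMDP S A) (k : ℕ) :
    Vseq M (k + 1) = stepF M (Vseq M k) := Function.iterate_succ_apply' _ _ _

lemma Vseq_mono (M : FinMDP S A) {j k : ℕ} (h : j ≤ k) : Vseq M j ⊆ Vseq M k := by
  induction k with
  | zero => simpa [Nat.le_zero.1 h]
  | succ k ih =>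
    rcases Nat.lt_or_ge j (k+1) with h' | h'
    · exact (ih (Nat.lt_succ_iff.1 h')).trans (by rw [Vseq_succ]; exact subset_stepF M _)
    · have : j = k + 1 := le_antisymm h h'
      simp [this]

lemma Vseq_fix (M : FinMDP S A) :
    stepF M (Vseq M (Fintype.card S)) = Vseq M (Fintype.card S) := by
  by_contra h
  have hne : ∀ k ≤ Fintype.card S, Vseq M k ≠ Vseq M (k + 1) := by
    intro k hk heq
    have hst : ∀ m, Vseq M (k + m) = Vseq M k := by
      intro m
      induction m with
      | zero => rfl
      | succ m ih => rw [show k + (m+1) = (k+m) + 1 from rfl, Vseq_succ, ih, ← Vseq_succ, ← heq]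
    apply h
    have h1 : Vseq M (Fintype.card S) = Vseq M k := by
      rw [show Fintype.card S = k + (Fintype.card S - k) from (Nat.add_sub_cancel' hk).symm]
      exact hst _
    rw [h1, ← Vseq_succ, ← heq]
  have hcard : ∀ k ≤ Fintype.card S + 1, k ≤ (Vseq M k).card := by
    intro k
    induction k with
    | zero => intro _; exact Nat.zero_le _
    | succ k ih =>
      intro hk
      have h1 : k ≤ (Vseq M k).card := ih (by omega)
      have h2 : Vseq M k ⊂ Vseq M (k+1) :=
        ssubset_of_subset_of_ne (Vseq_mono M (by omega)) (hne k (by omega))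
      have := Finset.card_lt_card h2
      omega
  have := hcard (Fintype.card S + 1) le_rfl
  have h2 := Finset.card_le_univ (Vseq M (Fintype.card S + 1))
  omega

lemma final_subset_Vseq (M : FinMDP S A) (k : ℕ) : M.final ⊆ Vseq M k :=
  Vseq_mono M (Nat.zero_le k)

end Rank
lemma all_mem_Vseq (M : FinMDP S A)
    (habs1 : ∀ σ, ValidStrat M σ → ∀ s : S,
      Filter.Tendsto (fun n => ∑ s' ∈ M.final, stateProb M σ n [] s s')
        Filter.atTop (nhds 1)) :
    ∀ s : S, s ∈ Vseq M (Fintype.card S) := by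
  classical
  by_contra h
  push_neg at h
  obtain ⟨s₀, hs₀⟩ := h
  have hbad : ∀ s, s ∉ Vseq M (Fintype.card S) → ∃ a ∈ M.enabled s,
      ∀ s', 0 < M.prob s a s' → s' ∉ Vseq M (Fintype.card S) := by
    intro s hs
    have h1 : s ∉ stepF M (Vseq M (Fintype.card S)) := by rw [Vseq_fix M]; exact hs
    rw [mem_stepF] at h1
    push_neg at h1
    obtain ⟨-, a, ha, h2⟩ := h1
    exact ⟨a, ha, fun s' hp hm => (h2 s' hp) hm⟩
  choose bad hbad1 hbad2 using hbad
  choose df hdf using fun s => M.enabled_nonempty s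
  set σ : List S → S → A → ℝ := fun _ s a =>
    if h : s ∈ Vseq M (Fintype.card S) then (if a = df s then 1 else 0)
    else (if a = bad s h then 1 else 0) with hσdef
  have hval : ValidStrat M σ := by
    intro past s
    refine ⟨?_, ?_, ?_⟩
    · intro a
      by_cases h : s ∈ Vseq M (Fintype.card S)
      · show (0:ℝ) ≤ if h : s ∈ Vseq M (Fintype.card S) then _ else _
        rw [dif_pos h]; split <;> norm_num
      · show (0:ℝ) ≤ if h : s ∈ Vseq M (Fintype.card S) then _ else _
        rw [dif_neg h]; split <;> norm_num
    · by_cases h : s ∈ Vseq M (Fintype.card S) <;>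
        simp [σ, h, Finset.sum_ite_eq', hdf s, hbad1]
    · intro a ha
      by_cases h : s ∈ Vseq M (Fintype.card S)
      · show (if h : s ∈ Vseq M (Fintype.card S) then _ else _) = (0:ℝ)
        rw [dif_pos h, if_neg]; rintro rfl; exact ha (hdf s)
      · show (if h : s ∈ Vseq M (Fintype.card S) then _ else _) = (0:ℝ)
        rw [dif_neg h, if_neg]; rintro rfl; exact ha (hbad1 s h)
  have hstay : ∀ n past s, s ∉ Vseq M (Fintype.card S) →
      ∀ s' ∈ M.final, stateProb M σ n past s s' = 0 := by
    intro n
    induction n with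
    | zero =>
      intro past s hs s' hs'
      have hne : s' ≠ s := by rintro rfl; exact hs (final_subset_Vseq M _ hs')
      simp [stateProb, hne]
    | succ n ih =>
      intro past s hs s' hs'
      have hf : s ∉ M.final := fun h => hs (final_subset_Vseq M _ h)
      simp only [stateProb, if_neg hf]
      apply Finset.sum_eq_zero
      intro a ha
      by_cases hab : a = bad s hs
      · have hz : ∑ s'' : S, M.prob s a s'' * stateProb M σ n (past ++ [s]) s'' s' = 0 := by
          apply Finset.sum_eq_zero
          intro s'' _
          rcases (M.prob_nonneg s a s'').eq_or_lt with hp | hp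
          · rw [← hp, zero_mul]
          · rw [hab] at hp ⊢
            rw [ih _ s'' (hbad2 s hs s'' hp) s' hs', mul_zero]
        rw [hz, mul_zero]
      · have : σ past s a = 0 := by simp [σ, dif_neg hs, if_neg hab]
        rw [this, zero_mul]
  have htend := habs1 σ hval s₀
  have h0 : ∀ n, ∑ s' ∈ M.final, stateProb M σ n [] s₀ s' = 0 := fun n =>
    Finset.sum_eq_zero (fun s' hs' => hstay n [] s₀ hs₀ s' hs')
  have htend0 : Filter.Tendsto (fun _ : ℕ => (0:ℝ)) Filter.atTop (nhds 1) := by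
    simpa [h0] using htend
  have := tendsto_nhds_unique htend0 tendsto_const_nhds
  norm_num at this
lemma exists_potential (M : FinMDP S A)
    (hall : ∀ s : S, s ∈ Vseq M (Fintype.card S))
    (R : ℝ) (hR : ∀ s a, M.rew s a ≤ R) (hR0 : 0 ≤ R) :
    ∃ Φ : S → ℝ, ∃ C : ℝ, (∀ s, 0 ≤ Φ s) ∧ (∀ s, Φ s ≤ C) ∧
      ∀ s, s ∉ M.final → ∀ a ∈ M.enabled s,
        M.rew s a + ∑ s' : S, M.prob s a s' * Φ s' ≤ Φ s := by
  classical
  set K := Fintype.card S with hK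
  have hex : ∀ s : S, ∃ k, s ∈ Vseq M k := fun s => ⟨K, hall s⟩
  set rk : S → ℕ := fun s => Nat.find (hex s) with hrkdef
  have hrk_mem : ∀ s, s ∈ Vseq M (rk s) := fun s => Nat.find_spec (hex s)
  have hrk_le : ∀ s, rk s ≤ K := fun s => Nat.find_min' (hex s) (hall s)
  have hrk_min : ∀ s k, s ∈ Vseq M k → rk s ≤ k := fun s k h => Nat.find_min' (hex s) h
  have hrk_pos : ∀ s, s ∉ M.final → 0 < rk s := by
    intro s hs
    rcases Nat.eq_zero_or_pos (rk s) with h | h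
    · exfalso; apply hs
      have h2 := hrk_mem s
      rw [h] at h2
      exact h2
    · exact h
  have hdec : ∀ s, s ∉ M.final → ∀ a ∈ M.enabled s,
      ∃ s', 0 < M.prob s a s' ∧ rk s' ≤ rk s - 1 := by
    intro s hs a ha
    obtain ⟨m, hm⟩ : ∃ m, rk s = m + 1 := ⟨rk s - 1, by have := hrk_pos s hs; omega⟩
    have h1 : s ∈ Vseq M (m + 1) := by rw [← hm]; exact hrk_mem s
    have h2 : s ∉ Vseq M m := fun h => by have := hrk_min s m h; omega
    rw [Vseq_succ, mem_stepF] at h1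
    rcases h1 with h1 | h1
    · exact absurd h1 h2
    · obtain ⟨s', hp, hmem⟩ := h1 a ha
      exact ⟨s', hp, by rw [hm]; simpa using hrk_min s' m hmem⟩
  -- minimum positive transition probability
  set Pr : Finset ℝ := insert 1
    (((Finset.univ : Finset (S × A × S)).filter
        (fun x => 0 < M.prob x.1 x.2.1 x.2.2)).image
      (fun x => M.prob x.1 x.2.1 x.2.2)) with hPrdef
  have hPrne : Pr.Nonempty := ⟨1, Finset.mem_insert_self 1 _⟩
  set q : ℝ := Pr.min' hPrne with hqdef
  have hq_pos : 0 < q := by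
    have hmem : q ∈ Pr := Finset.min'_mem Pr hPrne
    rcases Finset.mem_insert.1 hmem with h | h
    · rw [h]; norm_num
    · obtain ⟨x, hx, hx2⟩ := Finset.mem_image.1 h
      rw [← hx2]
      exact (Finset.mem_filter.1 hx).2
  have hq_le_one : q ≤ 1 := Finset.min'_le _ _ (Finset.mem_insert_self 1 _)
  have hq_le : ∀ s a s', 0 < M.prob s a s' → q ≤ M.prob s a s' := by
    intro s a s' hp
    apply Finset.min'_le
    exact Finset.mem_insert_of_mem
      (Finset.mem_image.2 ⟨(s, a, s'), Finset.mem_filter.2 ⟨Finset.mem_univ _, hp⟩, rfl⟩)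
  set β : ℝ := q / 2 with hβdef
  have hβ_pos : 0 < β := by rw [hβdef]; linarith
  have hβ_le_one : β ≤ 1 := by rw [hβdef]; linarith
  set Bc : ℝ := 2 / (q * β ^ K) with hBcdef
  have hBc_pos : 0 < Bc := by
    rw [hBcdef]; positivity
  have hBcq : Bc * (β ^ K * (q / 2)) = 1 := by
    rw [hBcdef]
    field_simp
  set φ : S → ℝ := fun s => Bc * (1 - β ^ rk s) with hφdef
  have hc_mono : ∀ j k : ℕ, j ≤ k → Bc * (1 - β ^ j) ≤ Bc * (1 - β ^ k) := by
    intro j k hjk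
    have := pow_le_pow_of_le_one hβ_pos.le hβ_le_one hjk
    nlinarith
  have hφ0 : ∀ s, 0 ≤ φ s := by
    intro s
    have : β ^ rk s ≤ 1 := pow_le_one₀ hβ_pos.le hβ_le_one
    show 0 ≤ Bc * (1 - β ^ rk s)
    nlinarith
  have hφ_le : ∀ s, φ s ≤ Bc * (1 - β ^ K) := fun s => hc_mono _ _ (hrk_le s)
  have hmain : ∀ s, s ∉ M.final → ∀ a ∈ M.enabled s,
      1 + ∑ s' : S, M.prob s a s' * φ s' ≤ φ s := by
    intro s hs a ha
    obtain ⟨s₀, hp₀, hr₀⟩ := hdec s hs a ha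
    set k := rk s - 1 with hkdef
    have hkk : rk s = k + 1 := by have := hrk_pos s hs; omega
    have hkK : k + 1 ≤ K := by rw [← hkk]; exact hrk_le s
    have hsum1 : ∑ s' : S, M.prob s a s' * φ s' =
        M.prob s a s₀ * φ s₀ + ∑ s' ∈ Finset.univ.erase s₀, M.prob s a s' * φ s' :=
      (Finset.add_sum_erase _ _ (Finset.mem_univ s₀)).symm
    have hsum_erase : ∑ s' ∈ Finset.univ.erase s₀, M.prob s a s' = 1 - M.prob s a s₀ := by
      rw [Finset.sum_erase_eq_sub (Finset.mem_univ s₀), M.prob_sum s a ha]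
    have herase : ∑ s' ∈ Finset.univ.erase s₀, M.prob s a s' * φ s' ≤
        (1 - M.prob s a s₀) * (Bc * (1 - β ^ K)) := by
      rw [← hsum_erase, Finset.sum_mul]
      apply Finset.sum_le_sum
      intro s' _
      exact mul_le_mul_of_nonneg_left (hφ_le s') (M.prob_nonneg _ _ _)
    have hφs₀ : φ s₀ ≤ Bc * (1 - β ^ k) := by
      apply hc_mono
      omega
    have hckK : Bc * (1 - β ^ k) ≤ Bc * (1 - β ^ K) := hc_mono _ _ (by omega)
    have hp₀q : q ≤ M.prob s a s₀ := hq_le _ _ _ hp₀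
    have hp₀le1 : M.prob s a s₀ ≤ 1 := by
      rw [← M.prob_sum s a ha]
      exact Finset.single_le_sum (fun s' _ => M.prob_nonneg s a s') (Finset.mem_univ s₀)
    have key : M.prob s a s₀ * φ s₀ + (1 - M.prob s a s₀) * (Bc * (1 - β ^ K)) ≤
        Bc * (1 - β ^ K) - q * (Bc * (1 - β ^ K) - Bc * (1 - β ^ k)) := by
      nlinarith [mul_le_mul_of_nonneg_left hφs₀ (M.prob_nonneg s a s₀),
        mul_le_mul_of_nonneg_right hp₀q (sub_nonneg.2 hckK)]
    have arith : 1 + (Bc * (1 - β ^ K) - q * (Bc * (1 - β ^ K) - Bc * (1 - β ^ k))) ≤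
        Bc * (1 - β ^ (k + 1)) := by
      have h1 : β ^ K ≤ β ^ k := pow_le_pow_of_le_one hβ_pos.le hβ_le_one (by omega)
      have h3 : β ^ (k + 1) = β ^ k * β := pow_succ _ _
      have h6 : q * (Bc * β ^ K) ≤ q * (Bc * β ^ k) := by
        apply mul_le_mul_of_nonneg_left _ hq_pos.le
        exact mul_le_mul_of_nonneg_left h1 hBc_pos.le
      have h7 : 0 ≤ (Bc * β ^ K) * (1 - q) := by
        apply mul_nonneg _ (by linarith)
        positivity
      rw [h3, hβdef]
      nlinarith [hBcq]
    calc 1 + ∑ s' : S, M.prob s a s' * φ s'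
        ≤ 1 + (M.prob s a s₀ * φ s₀ + (1 - M.prob s a s₀) * (Bc * (1 - β ^ K))) := by
          rw [hsum1]; linarith [herase]
      _ ≤ 1 + (Bc * (1 - β ^ K) - q * (Bc * (1 - β ^ K) - Bc * (1 - β ^ k))) := by
          linarith [key]
      _ ≤ Bc * (1 - β ^ (k + 1)) := arith
      _ = φ s := by show _ = Bc * (1 - β ^ rk s); rw [hkk]
  refine ⟨fun s => (R + 1) * φ s, (R + 1) * Bc, ?_, ?_, ?_⟩
  · intro s; exact mul_nonneg (by linarith) (hφ0 s)
  · intro s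
    apply mul_le_mul_of_nonneg_left _ (by linarith : (0:ℝ) ≤ R + 1)
    have : β ^ rk s ≤ 1 := pow_le_one₀ hβ_pos.le hβ_le_one
    have h0 : 0 < β ^ rk s := pow_pos hβ_pos _
    show Bc * (1 - β ^ rk s) ≤ Bc
    nlinarith
  · intro s hs a ha
    have hm := hmain s hs a ha
    have h1 : ∑ s' : S, M.prob s a s' * ((R + 1) * φ s') =
        (R + 1) * ∑ s' : S, M.prob s a s' * φ s' := by
      rw [Finset.mul_sum]
      apply Finset.sum_congr rfl
      intro s' _
      ring
    rw [h1]
    show M.rew s a + (R + 1) * ∑ s' : S, M.prob s a s' * φ s' ≤ (R + 1) * φ s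
    have h2 : M.rew s a ≤ R + 1 := by linarith [hR s a]
    nlinarith [Finset.sum_nonneg (fun s' (_ : s' ∈ Finset.univ) =>
      mul_nonneg (M.prob_nonneg s a s') (hφ0 s'))]
lemma EVr_le_potential (M : FinMDP S A) (Φ : S → ℝ) (hΦ0 : ∀ s, 0 ≤ Φ s)
    (hΦ : ∀ s, s ∉ M.final → ∀ a ∈ M.enabled s,
      M.rew s a + ∑ s' : S, M.prob s a s' * Φ s' ≤ Φ s)
    {σ : List S → S → A → ℝ} (hσ : ValidStrat M σ) :
    ∀ n past s, EVr M σ n past s ≤ Φ s := by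
  intro n
  induction n with
  | zero => intro past s; simpa [EVr] using hΦ0 s
  | succ n ih =>
    intro past s
    by_cases hf : s ∈ M.final
    · simpa [EVr, hf] using hΦ0 s
    · simp only [EVr, if_neg hf]
      calc ∑ a ∈ M.enabled s, σ past s a *
            (M.rew s a + ∑ s' : S, M.prob s a s' * EVr M σ n (past ++ [s]) s')
          ≤ ∑ a ∈ M.enabled s, σ past s a * Φ s := by
            apply Finset.sum_le_sum
            intro a ha
            apply mul_le_mul_of_nonneg_left _ ((hσ past s).1 a)
            calc M.rew s a + ∑ s' : S, M.prob s a s' * EVr M σ n (past ++ [s]) s'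
                ≤ M.rew s a + ∑ s' : S, M.prob s a s' * Φ s' := by
                  apply add_le_add_right
                  apply Finset.sum_le_sum
                  intro s' _
                  exact mul_le_mul_of_nonneg_left (ih _ s') (M.prob_nonneg _ _ _)
              _ ≤ Φ s := hΦ s hf a ha
        _ = Φ s := by rw [← Finset.sum_mul, (hσ past s).2.1, one_mul]
lemma indicator_valid (M : FinMDP S A) (pick : S → A) (h : ∀ s, pick s ∈ M.enabled s) :
    ValidStrat M (fun _ s a => if a = pick s then 1 else 0) := by
  intro past s
  refine ⟨fun a => by show (0:ℝ) ≤ if a = pick s then 1 else 0; split <;> norm_num,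
    by simp [Finset.sum_ite_eq', h s],
    fun a ha => by
      show (if a = pick s then (1:ℝ) else 0) = 0
      rw [if_neg]; rintro rfl; exact ha (h s)⟩

lemma indicator_pure (M : FinMDP S A) (pick : S → A) (h : ∀ s, pick s ∈ M.enabled s) :
    PureStrat M (fun _ s a => if a = pick s then 1 else 0) :=
  fun _ s => ⟨pick s, h s, fun _ => rfl⟩

lemma combine_valid {M : FinMDP S A} (SMin : Finset S) {μ χ : List S → S → A → ℝ}
    (hμ : ValidStrat M μ) (hχ : ValidStrat M χ) : ValidStrat M (combine SMin μ χ) := by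
  intro past s
  by_cases h : s ∈ SMin <;> simp only [combine, if_pos, if_neg, h]
  · exact hμ past s
  · exact hχ past s


/-- If under every strategy pair the probability of having reached the final
set by step `n` tends to `1`, then a (bounded, nonnegative) solution `P` of the
optimality equations is the value of the expected reachability-reward game, Min
has pure `ε`-optimal strategies, and every `ε`-greedy Min strategy satisfies the
concrete finite-horizon inequality. -/
theorem opt_eq_gives_value_and_eps_optimal
    (M : FinMDP S A) (SMin : Finset S) (P : S → ℝ)
    (hP0 : ∀ s, 0 ≤ P s) (B : ℝ) (hPB : ∀ s, P s ≤ B)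
    (hopt : OptEq M SMin P)
    (habs : ∀ μ χ, ValidStrat M μ → ValidStrat M χ → ∀ s : S,
      Filter.Tendsto
        (fun n => ∑ s' ∈ M.final, stateProb M (combine SMin μ χ) n [] s s')
        Filter.atTop (nhds 1)) :
    (∀ s : S, P s = ⨅ μ : {μ // ValidStrat M μ}, ⨆ χ : {χ // ValidStrat M χ},
        EReach M (combine SMin μ.1 χ.1) s) ∧
    (∀ ε > (0 : ℝ), ∃ μ, ValidStrat M μ ∧ PureStrat M μ ∧
      ∀ χ, ValidStrat M χ → ∀ s : S,
        EReach M (combine SMin μ χ) s ≤ P s + ε) ∧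
    (∀ ε > (0 : ℝ), ∀ μ χ, ValidStrat M μ → ValidStrat M χ →
      Greedy M SMin P ε μ → ∀ s : S, ∀ n : ℕ, 1 ≤ n →
        EVr M (combine SMin μ χ) n [] s +
          ∑ s' ∈ Finset.univ \ M.final,
            stateProb M (combine SMin μ χ) n [] s s' * P s' -
          (1 - (1 / 2 : ℝ) ^ n) * ε ≤ P s) := by
  classical
  -- a uniform bound on rewards
  set R : ℝ := ∑ s : S, ∑ a : A, M.rew s a with hRdef
  have hR0 : 0 ≤ R :=
    Finset.sum_nonneg fun s _ => Finset.sum_nonneg fun a _ => M.rew_nonneg s a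
  have hRb : ∀ s a, M.rew s a ≤ R := by
    intro s a
    calc M.rew s a ≤ ∑ a' : A, M.rew s a' :=
          Finset.single_le_sum (fun a' _ => M.rew_nonneg s a') (Finset.mem_univ a)
      _ ≤ R := Finset.single_le_sum
          (fun s' (_ : s' ∈ Finset.univ) => Finset.sum_nonneg fun a' _ => M.rew_nonneg s' a')
          (Finset.mem_univ s)
  -- uniform potential bound
  have habs1 : ∀ σ, ValidStrat M σ → ∀ s : S,
      Filter.Tendsto (fun n => ∑ s' ∈ M.final, stateProb M σ n [] s s')
        Filter.atTop (nhds 1) := by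
    intro σ hσ s
    have hc : combine SMin σ σ = σ := by
      funext past s' a
      simp [combine]
    have := habs σ σ hσ hσ s
    rwa [hc] at this
  obtain ⟨Φ, C, hΦ0, hΦC, hΦ⟩ :=
    exists_potential M (all_mem_Vseq M habs1) R hRb hR0
  have hEVrC : ∀ σ, ValidStrat M σ → ∀ n past s, EVr M σ n past s ≤ C :=
    fun σ hσ n past s => (EVr_le_potential M Φ hΦ0 hΦ hσ n past s).trans (hΦC s)
  have hbdd : ∀ σ, ValidStrat M σ → ∀ s,
      BddAbove (Set.range (fun n => EVr M σ n [] s)) := by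
    intro σ hσ s
    exact ⟨C, by rintro _ ⟨n, rfl⟩; exact hEVrC σ hσ n [] s⟩
  have hEReach_le : ∀ σ, ValidStrat M σ → ∀ s, EReach M σ s ≤ C :=
    fun σ hσ s => ciSup_le (fun n => hEVrC σ hσ n [] s)
  have hEReach_ge : ∀ σ, ValidStrat M σ → ∀ s n, EVr M σ n [] s ≤ EReach M σ s :=
    fun σ hσ s n => le_ciSup (hbdd σ hσ s) n
  have hEReach0 : ∀ σ, ValidStrat M σ → ∀ s, 0 ≤ EReach M σ s := by
    intro σ hσ s
    have := hEReach_ge σ hσ s 0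
    simpa [EVr] using this
  -- pure min and max strategies
  choose amin hamin_mem hamin_val using
    fun s => Finset.exists_mem_eq_inf' (M.enabled_nonempty s) (Bell M P s)
  choose amax hamax_mem hamax_val using
    fun s => Finset.exists_mem_eq_sup' (M.enabled_nonempty s) (Bell M P s)
  set μ0 : List S → S → A → ℝ := fun _ s a => if a = amin s then 1 else 0 with hμ0def
  set χ0 : List S → S → A → ℝ := fun _ s a => if a = amax s then 1 else 0 with hχ0def
  have hμ0valid : ValidStrat M μ0 := indicator_valid M amin hamin_mem
  have hμ0pure : PureStrat M μ0 := indicator_pure M amin hamin_mem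
  have hχ0valid : ValidStrat M χ0 := indicator_valid M amax hamax_mem
  have hμ0greedy : ∀ ε : ℝ, 0 < ε → Greedy M SMin P ε μ0 := by
    intro ε hε past s hsm hf a ha hne
    have hamin : a = amin s := by
      by_contra h
      exact hne (by simp [μ0, h])
    rw [hamin]
    have h1 : Bell M P s (amin s) = P s := by
      rw [← hamin_val s, ← hopt.2.1 s hf hsm]
    rw [h1]
    have : (0:ℝ) < ε / 2 ^ (past.length + 1) := by positivity
    linarith
  -- Bellman bound for combined strategies with greedy Min part
  have hbell_combine : ∀ (μ χ : List S → S → A → ℝ) (ε : ℝ), 0 ≤ ε →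
      Greedy M SMin P ε μ →
      ∀ past s, s ∉ M.final → ∀ a ∈ M.enabled s, combine SMin μ χ past s a ≠ 0 →
        Bell M P s a ≤ P s + ε / 2 ^ (past.length + 1) := by
    intro μ χ ε hε hgr past s hf a ha hne
    by_cases hsm : s ∈ SMin
    · have hcc : combine SMin μ χ past s a = μ past s a := by simp [combine, hsm]
      exact hgr past s hsm hf a ha (by rwa [hcc] at hne)
    · have h1 : Bell M P s a ≤ (M.enabled s).sup' (M.enabled_nonempty s) (Bell M P s) :=
        Finset.le_sup' _ ha
      rw [← hopt.2.2 s hf hsm] at h1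
      have : (0:ℝ) ≤ ε / 2 ^ (past.length + 1) := by positivity
      linarith
  -- Bellman lower bound for combined strategies with χ0 as Max part
  have hmaxb : ∀ (μ : List S → S → A → ℝ),
      ∀ past s, s ∉ M.final → ∀ a ∈ M.enabled s, combine SMin μ χ0 past s a ≠ 0 →
        P s ≤ Bell M P s a := by
    intro μ past s hf a ha hne
    by_cases hsm : s ∈ SMin
    · rw [hopt.2.1 s hf hsm]
      exact Finset.inf'_le _ ha
    · have hcc : combine SMin μ χ0 past s a = if a = amax s then 1 else 0 := by
        simp [combine, hsm, χ0]
      have hax : a = amax s := by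
        by_contra h
        rw [hcc, if_neg h] at hne
        exact hne rfl
      rw [hax, ← hamax_val s, ← hopt.2.2 s hf hsm]
  -- Part 3
  have part3 : ∀ ε > (0 : ℝ), ∀ μ χ, ValidStrat M μ → ValidStrat M χ →
      Greedy M SMin P ε μ → ∀ s : S, ∀ n : ℕ,
        EVr M (combine SMin μ χ) n [] s +
          ∑ s' ∈ Finset.univ \ M.final,
            stateProb M (combine SMin μ χ) n [] s s' * P s' -
          (1 - (1 / 2 : ℝ) ^ n) * ε ≤ P s := by
    intro ε hε μ χ hμ hχ hgr s n
    have := key_min M P hP0 (combine_valid SMin hμ hχ) hε.le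
      (hbell_combine μ χ ε hε.le hgr) n [] s
    simp only [List.length_nil, pow_zero, div_one] at this
    linarith
  -- Part 2
  have part2 : ∀ ε > (0 : ℝ),
      ∀ χ, ValidStrat M χ → ∀ s : S, EReach M (combine SMin μ0 χ) s ≤ P s + ε := by
    intro ε hε χ hχ s
    apply ciSup_le
    intro n
    have h1 := part3 ε hε μ0 χ hμ0valid hχ (hμ0greedy ε hε) s n
    have h2 : 0 ≤ ∑ s' ∈ Finset.univ \ M.final,
        stateProb M (combine SMin μ0 χ) n [] s s' * P s' :=
      Finset.sum_nonneg fun s' _ =>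
        mul_nonneg (stateProb_nonneg M (combine_valid SMin hμ0valid hχ) n [] s s') (hP0 s')
    have h3 : (0:ℝ) ≤ (1/2 : ℝ) ^ n := by positivity
    nlinarith
  refine ⟨?_, fun ε hε => ⟨μ0, hμ0valid, hμ0pure, part2 ε hε⟩,
    fun ε hε μ χ hμ hχ hgr s n _ => part3 ε hε μ χ hμ hχ hgr s n⟩
  -- Part 1
  intro s
  haveI : Nonempty {μ // ValidStrat M μ} := ⟨⟨μ0, hμ0valid⟩⟩
  apply le_antisymm
  · -- P s ≤ iInf
    apply le_ciInf
    rintro ⟨μ, hμ⟩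
    have hval := combine_valid SMin hμ hχ0valid
    have hKM := key_max M P hval (hmaxb μ)
    have hB0 : 0 ≤ B := (hP0 s).trans (hPB s)
    have hb1 : ∀ n, P s - (1 - ∑ s' ∈ M.final,
        stateProb M (combine SMin μ χ0) n [] s s') * B ≤
        EReach M (combine SMin μ χ0) s := by
      intro n
      have h1 := hKM n [] s
      have hsplit : ∑ s' : S, stateProb M (combine SMin μ χ0) n [] s s' * P s' =
          ∑ s' ∈ Finset.univ \ M.final, stateProb M (combine SMin μ χ0) n [] s s' * P s' := by
        rw [← Finset.sum_sdiff (Finset.subset_univ M.final)]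
        have : ∑ s' ∈ M.final, stateProb M (combine SMin μ χ0) n [] s s' * P s' = 0 :=
          Finset.sum_eq_zero fun s' hs' => by rw [hopt.1 s' hs', mul_zero]
        rw [this, add_zero]
      have h2 : ∑ s' ∈ Finset.univ \ M.final,
          stateProb M (combine SMin μ χ0) n [] s s' * P s' ≤
          (1 - ∑ s' ∈ M.final, stateProb M (combine SMin μ χ0) n [] s s') * B := by
        calc ∑ s' ∈ Finset.univ \ M.final, stateProb M (combine SMin μ χ0) n [] s s' * P s'
            ≤ ∑ s' ∈ Finset.univ \ M.final, stateProb M (combine SMin μ χ0) n [] s s' * B :=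
              Finset.sum_le_sum fun s' _ => mul_le_mul_of_nonneg_left (hPB s')
                (stateProb_nonneg M hval n [] s s')
          _ = (∑ s' ∈ Finset.univ \ M.final,
                stateProb M (combine SMin μ χ0) n [] s s') * B := by rw [Finset.sum_mul]
          _ = (1 - ∑ s' ∈ M.final, stateProb M (combine SMin μ χ0) n [] s s') * B := by
              congr 1
              have := Finset.sum_sdiff (Finset.subset_univ M.final)
                (f := fun s' => stateProb M (combine SMin μ χ0) n [] s s')
              rw [stateProb_sum_one M hval n [] s] at this
              linarith
      have h3 := hEReach_ge _ hval s n
      rw [hsplit] at h1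
      linarith
    have htend := habs μ χ0 hμ hχ0valid s
    have hlim : Filter.Tendsto
        (fun n => P s - (1 - ∑ s' ∈ M.final,
          stateProb M (combine SMin μ χ0) n [] s s') * B)
        Filter.atTop (nhds (P s - (1 - 1) * B)) :=
      Filter.Tendsto.sub tendsto_const_nhds
        ((Filter.Tendsto.sub tendsto_const_nhds htend).mul tendsto_const_nhds)
    have hle : P s - (1 - 1) * B ≤ EReach M (combine SMin μ χ0) s :=
      le_of_tendsto hlim (Filter.Eventually.of_forall hb1)
    have hle2 : P s ≤ EReach M (combine SMin μ χ0) s := by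
      simpa using hle
    refine hle2.trans (le_ciSup (f := fun χ : {χ // ValidStrat M χ} =>
      EReach M (combine SMin μ χ.1) s) ?_ ⟨χ0, hχ0valid⟩)
    exact ⟨C, by rintro _ ⟨χ, rfl⟩; exact hEReach_le _ (combine_valid SMin hμ χ.2) s⟩
  · -- iInf ≤ P s
    apply le_of_forall_pos_le_add
    intro ε hε
    have hbddB : BddBelow (Set.range (fun μ : {μ // ValidStrat M μ} =>
        ⨆ χ : {χ // ValidStrat M χ}, EReach M (combine SMin μ.1 χ.1) s)) := by
      refine ⟨0, ?_⟩
      rintro _ ⟨μ, rfl⟩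
      have h1 : EReach M (combine SMin μ.1 χ0) s ≤
          ⨆ χ : {χ // ValidStrat M χ}, EReach M (combine SMin μ.1 χ.1) s := by
        apply le_ciSup (f := fun χ : {χ // ValidStrat M χ} =>
          EReach M (combine SMin μ.1 χ.1) s) _ ⟨χ0, hχ0valid⟩
        exact ⟨C, by rintro _ ⟨χ, rfl⟩; exact hEReach_le _ (combine_valid SMin μ.2 χ.2) s⟩
      exact (hEReach0 _ (combine_valid SMin μ.2 hχ0valid) s).trans h1
    have h1 : (⨅ μ : {μ // ValidStrat M μ}, ⨆ χ : {χ // ValidStrat M χ},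
        EReach M (combine SMin μ.1 χ.1) s) ≤
        ⨆ χ : {χ // ValidStrat M χ}, EReach M (combine SMin μ0 χ.1) s :=
      ciInf_le hbddB ⟨μ0, hμ0valid⟩
    have h2 : (⨆ χ : {χ // ValidStrat M χ}, EReach M (combine SMin μ0 χ.1) s) ≤ P s + ε :=
      ciSup_le fun χ => part2 ε hε χ.1 χ.2 s
    linarith
end
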